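/- arXiv:2003.09380 — 8 statements merged into one kernel-verified Lean document; each statement's English description precedes it below -/
import Mathlib

section
/- For 0 < δ ≤ 1, let S_δ be the set of d×d matrices A with nonnegative entries, each column containing a positive entry, such that A(i,j) ≥ δ·A(i,k) for all indices 1 ≤ i, j, k ≤ d. Then S_δ is closed under matrix multiplication: if A, B ∈ S_δ then AB ∈ S_δ. -/
open Matrix BigOperators

/-- The semigroup `S` of nonnegative matrices each of whose columns contains a
positive entry. -/
def memS {d : ℕ} (A : Matrix (Fin d) (Fin d) ℝ) : Prop :=
  (∀ i j, 0 ≤ A i j) ∧ ∀ j, ∃ i, 0 < A i j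

/-- The set `S_δ` of matrices of `S` satisfying `A(i,j) ≥ δ A(i,k)` for all `i,j,k`. -/
def memSdelta {d : ℕ} (δ : ℝ) (A : Matrix (Fin d) (Fin d) ℝ) : Prop :=
  memS A ∧ ∀ i j k, δ * A i k ≤ A i j

theorem stmt1 {d : ℕ} (hd : 2 ≤ d) (δ : ℝ) (hδ0 : 0 < δ) (hδ1 : δ ≤ 1)
    (A B : Matrix (Fin d) (Fin d) ℝ) (hA : memSdelta δ A) (hB : memSdelta δ B) :
    memSdelta δ (A * B) := by
  obtain ⟨⟨hA0, hApos⟩, hAδ⟩ := hA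
  obtain ⟨⟨hB0, hBpos⟩, hBδ⟩ := hB
  have hnn : ∀ i j, 0 ≤ (A * B) i j := by
    intro i j
    simp only [Matrix.mul_apply]
    exact Finset.sum_nonneg fun l _ => mul_nonneg (hA0 i l) (hB0 l j)
  refine ⟨⟨hnn, ?_⟩, ?_⟩
  · intro j
    obtain ⟨l, hl⟩ := hBpos j
    obtain ⟨i, hi⟩ := hApos l
    refine ⟨i, ?_⟩
    simp only [Matrix.mul_apply]
    have : 0 < A i l * B l j := mul_pos hi hl
    calc (0:ℝ) < A i l * B l j := this
      _ ≤ ∑ x, A i x * B x j := Finset.single_le_sum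
          (fun x _ => mul_nonneg (hA0 i x) (hB0 x j)) (Finset.mem_univ l)
  · intro i j k
    simp only [Matrix.mul_apply, Finset.mul_sum]
    refine Finset.sum_le_sum fun l _ => ?_
    calc δ * (A i l * B l k) = A i l * (δ * B l k) := by ring
      _ ≤ A i l * B l j := mul_le_mul_of_nonneg_left (hBδ l j k) (hA0 i l)
end

section
/- For any A, B ∈ S_δ one has δ·‖A‖·‖B‖ ≤ ‖AB‖ ≤ ‖A‖·‖B‖, where ‖·‖ denotes the maximum column sum norm. -/
open Matrix BigOperators

/-- The maximum column sum of a matrix. -/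
noncomputable def matNorm {d : ℕ} (A : Matrix (Fin d) (Fin d) ℝ) : ℝ :=
  ⨆ j, ∑ i, A i j

theorem stmt3 {d : ℕ} (hd : 2 ≤ d) (δ : ℝ) (hδ0 : 0 < δ) (hδ1 : δ ≤ 1)
    (A B : Matrix (Fin d) (Fin d) ℝ) (hA : memSdelta δ A) (hB : memSdelta δ B) :
    δ * matNorm A * matNorm B ≤ matNorm (A * B) ∧
      matNorm (A * B) ≤ matNorm A * matNorm B := by
  have hne : Nonempty (Fin d) := ⟨⟨0, by omega⟩⟩
  set cA : Fin d → ℝ := fun k => ∑ i, A i k with hcA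
  set cB : Fin d → ℝ := fun k => ∑ i, B i k with hcB
  have hbddA : BddAbove (Set.range cA) := (Set.finite_range cA).bddAbove
  have hbddB : BddAbove (Set.range cB) := (Set.finite_range cB).bddAbove
  have hAle : ∀ k, cA k ≤ matNorm A := fun k => le_ciSup hbddA k
  have hBle : ∀ k, cB k ≤ matNorm B := fun k => le_ciSup hbddB k
  have hcAnn : ∀ k, 0 ≤ cA k := fun k => Finset.sum_nonneg fun i _ => hA.1.1 i k
  have hcBnn : ∀ k, 0 ≤ cB k := fun k => Finset.sum_nonneg fun i _ => hB.1.1 i k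
  have hAnn : 0 ≤ matNorm A := le_trans (hcAnn (Classical.arbitrary _)) (hAle _)
  -- matNorm A attained
  obtain ⟨kA, hkA⟩ := Finite.exists_max cA
  have hAeq : matNorm A = cA kA := le_antisymm (ciSup_le hkA) (le_ciSup hbddA kA)
  obtain ⟨kB, hkB⟩ := Finite.exists_max cB
  have hBeq : matNorm B = cB kB := le_antisymm (ciSup_le hkB) (le_ciSup hbddB kB)
  -- key lower bound on columns of A
  have hlowA : ∀ k, δ * matNorm A ≤ cA k := by
    intro k
    rw [hAeq]
    calc δ * cA kA = ∑ i, δ * A i kA := by simp [hcA, Finset.mul_sum]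
    _ ≤ ∑ i, A i k := Finset.sum_le_sum fun i _ => hA.2 i k kA
  -- column sum of product
  have hprod : ∀ j, (∑ i, (A * B) i j) = ∑ k, cA k * B k j := by
    intro j
    simp only [Matrix.mul_apply]
    rw [Finset.sum_comm]
    exact Finset.sum_congr rfl fun k _ => by rw [hcA, Finset.sum_mul]
  constructor
  · calc δ * matNorm A * matNorm B = ∑ k, (δ * matNorm A) * B k kB := by
          rw [hBeq]; simp [hcB, Finset.mul_sum, mul_assoc]
    _ ≤ ∑ k, cA k * B k kB :=
        Finset.sum_le_sum fun k _ => mul_le_mul_of_nonneg_right (hlowA k) (hB.1.1 k kB)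
    _ = ∑ i, (A * B) i kB := (hprod kB).symm
    _ ≤ matNorm (A * B) := le_ciSup ((Set.finite_range fun j => ∑ i, (A * B) i j).bddAbove) kB
  · apply ciSup_le
    intro j
    calc (∑ i, (A * B) i j) = ∑ k, cA k * B k j := hprod j
    _ ≤ ∑ k, matNorm A * B k j :=
        Finset.sum_le_sum fun k _ => mul_le_mul_of_nonneg_right (hAle k) (hB.1.1 k j)
    _ = matNorm A * cB j := by rw [hcB, Finset.mul_sum]
    _ ≤ matNorm A * matNorm B := mul_le_mul_of_nonneg_left (hBle j) hAnn
end

section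
/- If A ∈ S_δ, then the transpose of A maps the cone R_+^d into the proper subcone C_{δ/d} = {x ∈ R_+^d : x_i ≥ (δ/d)|x| for all i = 1,…,d}. Precisely, for every y ∈ R_+^d and every index i, ⟨e_i, Aᵀ y⟩ ≥ (δ/d)|Aᵀ y|. -/
open Matrix BigOperators

/-- The ℓ¹ norm on `ℝ^d`. -/
def l1 {d : ℕ} (x : Fin d → ℝ) : ℝ := ∑ i, |x i|

/-- For `A ∈ S_δ`, the transpose of `A` maps `ℝ_+^d` into the subcone
`C_{δ/d} = {x ∈ ℝ_+^d : ⟨e_i, x⟩ ≥ (δ/d)|x| for all i}`. -/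
theorem stmt4 {d : ℕ} (hd : 2 ≤ d) (δ : ℝ) (hδ0 : 0 < δ) (hδ1 : δ ≤ 1)
    (A : Matrix (Fin d) (Fin d) ℝ) (hA : memSdelta δ A)
    (y : Fin d → ℝ) (hy : ∀ j, 0 ≤ y j) (i : Fin d) :
    (δ / (d : ℝ)) * l1 (A.transpose.mulVec y) ≤ A.transpose.mulVec y i := by
  have hd0 : (0:ℝ) < d := by positivity
  have hnn : ∀ j, 0 ≤ A.transpose.mulVec y j := by
    intro j
    simp only [Matrix.mulVec, Matrix.transpose_apply, dotProduct]
    exact Finset.sum_nonneg fun k _ => mul_nonneg (hA.1.1 k j) (hy k)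
  have hl1 : l1 (A.transpose.mulVec y) = ∑ j, A.transpose.mulVec y j := by
    unfold l1
    exact Finset.sum_congr rfl fun j _ => abs_of_nonneg (hnn j)
  have key : δ * l1 (A.transpose.mulVec y) ≤ (d:ℝ) * A.transpose.mulVec y i := by
    rw [hl1, Finset.mul_sum]
    have : ∀ j : Fin d, δ * A.transpose.mulVec y j ≤ A.transpose.mulVec y i := by
      intro j
      simp only [Matrix.mulVec, Matrix.transpose_apply, dotProduct,
        Finset.mul_sum]
      apply Finset.sum_le_sum
      intro k _
      rw [← mul_assoc]
      exact mul_le_mul_of_nonneg_right (hA.2 k i j) (hy k)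
    calc ∑ j, δ * A.transpose.mulVec y j ≤ ∑ _j : Fin d, A.transpose.mulVec y i :=
          Finset.sum_le_sum fun j _ => this j
      _ = (d:ℝ) * A.transpose.mulVec y i := by
          rw [Finset.sum_const, Finset.card_univ, Fintype.card_fin, nsmul_eq_mul]
  rw [div_mul_eq_mul_div, div_le_iff₀ hd0, mul_comm (A.transpose.mulVec y i)]
  exact key
end

section
/- Define on R_+^d \ {0} the quantity m(x,y) = min over those i with y_i > 0 of x_i/y_i, and the Hilbert-type distance d(x,y) = (1 − m(x,y)m(y,x))/(1 + m(x,y)m(y,x)). Then for every A ∈ S_δ, acting projectively on the simplex X, one has sup_{x,y ∈ X} d(A·x, A·y) ≤ (1 − δ⁴)/(1 + δ⁴) < 1. -/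
open Matrix BigOperators

/-- `m(x,y) = min { x_i / y_i : y_i > 0 }`. -/
noncomputable def mfun {d : ℕ} (x y : Fin d → ℝ) : ℝ :=
  ⨅ i : {i : Fin d // 0 < y i}, x i / y i

/-- The projective (Hilbert-type) distance on the simplex. -/
noncomputable def dH {d : ℕ} (x y : Fin d → ℝ) : ℝ :=
  (1 - mfun x y * mfun y x) / (1 + mfun x y * mfun y x)

/-- The projective action `A · x = Ax / |Ax|`. -/
noncomputable def projAct {d : ℕ} (A : Matrix (Fin d) (Fin d) ℝ) (x : Fin d → ℝ) :
    Fin d → ℝ :=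
  (l1 (A.mulVec x))⁻¹ • A.mulVec x

/-- Lower bound on `mfun` of scaled vectors from a pointwise bound. -/
lemma mfun_bound {d : ℕ} (u v : Fin d → ℝ) (c c' t : ℝ) (hc : 0 < c) (hc' : 0 < c')
    (ht : 0 ≤ t) (hne : ∃ i, 0 < v i) (h : ∀ i, t * v i ≤ u i) :
    (c' / c) * t ≤ mfun (c⁻¹ • u) (c'⁻¹ • v) := by
  obtain ⟨i0, hi0⟩ := hne
  haveI : Nonempty {i : Fin d // 0 < (c'⁻¹ • v) i} :=
    ⟨⟨i0, by simp only [Pi.smul_apply, smul_eq_mul]; positivity⟩⟩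
  apply le_ciInf
  rintro ⟨i, hi⟩
  have hvi : 0 < v i := by
    simp only [Pi.smul_apply, smul_eq_mul] at hi
    nlinarith [inv_pos.mpr hc']
  have ht' : t ≤ u i / v i := (le_div_iff₀ hvi).mpr (h i)
  calc (c' / c) * t ≤ (c' / c) * (u i / v i) :=
        mul_le_mul_of_nonneg_left ht' (by positivity)
    _ = (c⁻¹ • u) i / (c'⁻¹ • v) i := by
        simp only [Pi.smul_apply, smul_eq_mul]
        field_simp

theorem stmt6 {d : ℕ} (hd : 2 ≤ d) (δ : ℝ) (hδ0 : 0 < δ) (hδ1 : δ ≤ 1)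
    (A : Matrix (Fin d) (Fin d) ℝ) (hA : memSdelta δ A) :
    (∀ x y : Fin d → ℝ, (∀ i, 0 ≤ x i) → (∑ i, x i) = 1 →
        (∀ i, 0 ≤ y i) → (∑ i, y i) = 1 →
        dH (projAct A x) (projAct A y) ≤ (1 - δ ^ 4) / (1 + δ ^ 4)) ∧
      (1 - δ ^ 4) / (1 + δ ^ 4) < 1 := by
  obtain ⟨⟨hApos, hAcol⟩, hAδ⟩ := hA
  have hd0 : 0 < d := by omega
  refine ⟨?_, ?_⟩
  · intro x y hx hxs hy hys
    set k : Fin d := ⟨0, hd0⟩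
    -- pointwise bound: δ² (Aw)_i ≤ (Az)_i for simplex vectors z, w
    have key : ∀ z w : Fin d → ℝ, (∀ i, 0 ≤ z i) → (∑ i, z i) = 1 →
        (∀ i, 0 ≤ w i) → (∑ i, w i) = 1 →
        ∀ i, δ ^ 2 * A.mulVec w i ≤ A.mulVec z i := by
      intro z w hz hzs hw hws i
      have h1 : δ * A i k ≤ A.mulVec z i := by
        have e : δ * A i k = ∑ j, δ * A i k * z j := by
          rw [← Finset.mul_sum, hzs, mul_one]
        rw [e]
        simp only [Matrix.mulVec, dotProduct]
        exact Finset.sum_le_sum fun j _ =>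
          mul_le_mul_of_nonneg_right (hAδ i j k) (hz j)
      have h2 : A.mulVec w i ≤ A i k / δ := by
        have e : A i k / δ = ∑ j, (A i k / δ) * w j := by
          rw [← Finset.mul_sum, hws, mul_one]
        rw [e]
        simp only [Matrix.mulVec, dotProduct]
        refine Finset.sum_le_sum fun j _ => ?_
        have hij : A i j ≤ A i k / δ := (le_div_iff₀ hδ0).mpr (by
          have := hAδ i k j; linarith)
        exact mul_le_mul_of_nonneg_right hij (hw j)
      have h3 : δ ^ 2 * A.mulVec w i ≤ δ * A i k := by
        have := mul_le_mul_of_nonneg_left h2 (by positivity : (0:ℝ) ≤ δ ^ 2)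
        calc δ ^ 2 * A.mulVec w i ≤ δ ^ 2 * (A i k / δ) := this
          _ = δ * A i k := by field_simp
      linarith
    -- positivity of some entry of A.mulVec w
    have hposentry : ∀ w : Fin d → ℝ, (∀ i, 0 ≤ w i) → (∑ i, w i) = 1 →
        ∃ i, 0 < A.mulVec w i := by
      intro w hw hws
      have hj : ∃ j, 0 < w j := by
        by_contra h
        push_neg at h
        have : ∑ i, w i = 0 :=
          Finset.sum_eq_zero fun i _ => le_antisymm (h i) (hw i)
        rw [this] at hws; norm_num at hws
      obtain ⟨j, hj⟩ := hj
      obtain ⟨i, hi⟩ := hAcol j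
      refine ⟨i, ?_⟩
      have : A i j * w j ≤ A.mulVec w i := by
        simp only [Matrix.mulVec, dotProduct]
        exact Finset.single_le_sum (fun l _ => mul_nonneg (hApos i l) (hw l))
          (Finset.mem_univ j)
      nlinarith
    -- positivity of l1 norms
    have hl1pos : ∀ w : Fin d → ℝ, (∀ i, 0 ≤ w i) → (∑ i, w i) = 1 →
        0 < l1 (A.mulVec w) := by
      intro w hw hws
      obtain ⟨i, hi⟩ := hposentry w hw hws
      have : |A.mulVec w i| ≤ l1 (A.mulVec w) := by
        unfold l1
        exact Finset.single_le_sum (f := fun l => |A.mulVec w l|)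
          (fun l _ => abs_nonneg _) (Finset.mem_univ i)
      rw [abs_of_pos hi] at this
      linarith
    set u := A.mulVec x with hu
    set v := A.mulVec y with hv
    set c := l1 u with hc
    set c' := l1 v with hc'
    have hcpos : 0 < c := hl1pos x hx hxs
    have hc'pos : 0 < c' := hl1pos y hy hys
    have hm1 : (c' / c) * δ ^ 2 ≤ mfun (projAct A x) (projAct A y) := by
      have := mfun_bound u v c c' (δ ^ 2) hcpos hc'pos (by positivity)
        (hposentry y hy hys) (key x y hx hxs hy hys)
      simpa [projAct, hu, hv, hc, hc'] using this
    have hm2 : (c / c') * δ ^ 2 ≤ mfun (projAct A y) (projAct A x) := by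
      have := mfun_bound v u c' c (δ ^ 2) hc'pos hcpos (by positivity)
        (hposentry x hx hxs) (key y x hy hys hx hxs)
      simpa [projAct, hu, hv, hc, hc'] using this
    have hb1 : 0 < (c' / c) * δ ^ 2 := by positivity
    have hb2 : 0 < (c / c') * δ ^ 2 := by positivity
    have hprod : δ ^ 4 ≤ mfun (projAct A x) (projAct A y) * mfun (projAct A y) (projAct A x) := by
      have h := mul_le_mul hm1 hm2 (le_of_lt hb2) (le_trans (le_of_lt hb1) hm1)
      have e : (c' / c) * δ ^ 2 * ((c / c') * δ ^ 2) = δ ^ 4 := by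
        field_simp
      linarith [e ▸ h]
    set p := mfun (projAct A x) (projAct A y) * mfun (projAct A y) (projAct A x) with hp
    have hppos : 0 < p := lt_of_lt_of_le (by positivity) hprod
    rw [dH, ← hp]
    rw [div_le_div_iff₀ (by linarith) (by positivity)]
    nlinarith [pow_pos hδ0 4]
  · rw [div_lt_one (by positivity)]
    nlinarith [pow_pos hδ0 4]
end

section
/- With the distance d(x,y) = (1 − m(x,y)m(y,x))/(1 + m(x,y)m(y,x)) on the simplex X, one has |x − y| ≤ 2·d(x,y) for all x, y ∈ X, where |·| denotes the ℓ¹ norm. -/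
open BigOperators

lemma exists_pos_of_sum_one {d : ℕ} (y : Fin d → ℝ) (hy : ∀ i, 0 ≤ y i)
    (hy1 : ∑ i, y i = 1) : ∃ i, 0 < y i := by
  by_contra h
  push_neg at h
  have : ∑ i, y i ≤ 0 := Finset.sum_nonpos fun i _ => h i
  linarith

lemma mfun_nonneg {d : ℕ} (x y : Fin d → ℝ) (hx : ∀ i, 0 ≤ x i)
    (hne : ∃ i, 0 < y i) : 0 ≤ mfun x y := by
  haveI : Nonempty {i : Fin d // 0 < y i} := ⟨⟨hne.choose, hne.choose_spec⟩⟩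
  exact le_ciInf fun i => div_nonneg (hx i) i.2.le

lemma mfun_le {d : ℕ} (x y : Fin d → ℝ) {j : Fin d} (hj : 0 < y j) :
    mfun x y ≤ x j / y j := by
  unfold mfun
  exact ciInf_le (Set.Finite.bddBelow (Set.finite_range _)) (⟨j, hj⟩ : {i : Fin d // 0 < y i})

lemma mfun_mul_le {d : ℕ} (x y : Fin d → ℝ) (hx : ∀ i, 0 ≤ x i)
    (hy : ∀ i, 0 ≤ y i) (i : Fin d) : mfun x y * y i ≤ x i := by
  rcases lt_or_eq_of_le (hy i) with h | h
  · have := mfun_le x y h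
    calc mfun x y * y i ≤ (x i / y i) * y i := mul_le_mul_of_nonneg_right this h.le
      _ = x i := div_mul_cancel₀ _ h.ne'
  · rw [← h, mul_zero]; exact hx i

lemma mfun_le_one {d : ℕ} (x y : Fin d → ℝ) (hx : ∀ i, 0 ≤ x i)
    (hx1 : ∑ i, x i = 1) (hy : ∀ i, 0 ≤ y i) (hy1 : ∑ i, y i = 1) :
    mfun x y ≤ 1 := by
  have hex : ∃ j, 0 < y j ∧ x j ≤ y j := by
    by_contra h
    push_neg at h
    have hne : ∃ i, 0 < y i := exists_pos_of_sum_one y hy hy1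
    have hfne : (Finset.univ.filter (fun i => 0 < y i)).Nonempty :=
      ⟨hne.choose, by simp [hne.choose_spec]⟩
    have h1 : ∑ i ∈ Finset.univ.filter (fun i => 0 < y i), y i = 1 := by
      rw [← hy1]
      apply Finset.sum_filter_of_ne
      intro i _ hne'
      rcases lt_or_eq_of_le (hy i) with h' | h'
      · exact h'
      · exact absurd h'.symm hne'
    have h2 : ∑ i ∈ Finset.univ.filter (fun i => 0 < y i), y i
        < ∑ i ∈ Finset.univ.filter (fun i => 0 < y i), x i := by
      apply Finset.sum_lt_sum_of_nonempty hfne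
      intro i hi
      exact h i (by simpa using hi)
    have h3 : ∑ i ∈ Finset.univ.filter (fun i => 0 < y i), x i ≤ ∑ i, x i :=
      Finset.sum_le_sum_of_subset_of_nonneg (Finset.filter_subset _ _)
        (fun i _ _ => hx i)
    rw [hx1] at h3
    linarith
  obtain ⟨j, hj, hxj⟩ := hex
  calc mfun x y ≤ x j / y j := mfun_le x y hj
    _ ≤ 1 := by rw [div_le_one hj]; exact hxj

lemma endgame (a b s U V : ℝ) (ha0 : 0 ≤ a) (ha1 : a ≤ 1) (hb0 : 0 ≤ b) (hb1 : b ≤ 1)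
    (hs0 : 0 ≤ s) (hU0 : 0 ≤ U) (hV0 : 0 ≤ V)
    (h_sU : s ≤ (1 - a) * U) (h_sV : s ≤ (1 - b) * V)
    (h_UV : U + b * V ≤ 1) : s * (1 + a * b) ≤ 1 - a * b := by
  have hstar : s * (1 - a * b) ≤ (1 - a) * (1 - b) := by
    nlinarith [mul_le_mul_of_nonneg_left h_UV
        (mul_nonneg (by linarith : (0:ℝ) ≤ 1 - a) (by linarith : (0:ℝ) ≤ 1 - b)),
      mul_le_mul_of_nonneg_left h_sV (mul_nonneg hb0 (by linarith : (0:ℝ) ≤ 1 - a)),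
      mul_le_mul_of_nonneg_left h_sU (by linarith : (0:ℝ) ≤ 1 - b)]
  have hpoly : (1 - a) * (1 - b) * (1 + a * b) ≤ (1 - a * b) ^ 2 := by
    nlinarith [mul_nonneg ha0 (sq_nonneg (1 - b)), mul_nonneg hb0 (sq_nonneg (1 - a))]
  have hab1 : a * b ≤ 1 := by nlinarith
  rcases eq_or_lt_of_le hab1 with h | h
  · have haa : a * b ≤ a := by nlinarith
    have ha' : a = 1 := le_antisymm ha1 (by linarith)
    have hs' : s ≤ 0 := by nlinarith [h_sU]
    nlinarith
  · nlinarith [mul_le_mul_of_nonneg_right hstar (by nlinarith : (0:ℝ) ≤ 1 + a * b), hpoly]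

theorem stmt7 {d : ℕ} (hd : 2 ≤ d) (x y : Fin d → ℝ)
    (hx : ∀ i, 0 ≤ x i) (hx1 : ∑ i, x i = 1)
    (hy : ∀ i, 0 ≤ y i) (hy1 : ∑ i, y i = 1) :
    l1 (x - y) ≤ 2 * dH x y := by
  set a := mfun x y with ha_def
  set b := mfun y x with hb_def
  have hnex : ∃ i, 0 < x i := exists_pos_of_sum_one x hx hx1
  have hney : ∃ i, 0 < y i := exists_pos_of_sum_one y hy hy1
  have ha0 : 0 ≤ a := mfun_nonneg x y hx hney
  have hb0 : 0 ≤ b := mfun_nonneg y x hy hnex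
  have ha1 : a ≤ 1 := mfun_le_one x y hx hx1 hy hy1
  have hb1 : b ≤ 1 := mfun_le_one y x hy hy1 hx hx1
  have h1 : ∀ i, a * y i ≤ x i := mfun_mul_le x y hx hy
  have h2 : ∀ i, b * x i ≤ y i := mfun_mul_le y x hy hx
  set s := ∑ i, max (y i - x i) 0 with hs_def
  set t := ∑ i, max (x i - y i) 0 with ht_def
  set U := ∑ i, (if x i < y i then y i else 0) with hU_def
  set V := ∑ i, (if y i < x i then x i else 0) with hV_def
  have hs0 : 0 ≤ s := Finset.sum_nonneg fun i _ => le_max_right _ _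
  have hU0 : 0 ≤ U := Finset.sum_nonneg fun i _ => by
    split <;> [exact hy i; exact le_refl 0]
  have hV0 : 0 ≤ V := Finset.sum_nonneg fun i _ => by
    split <;> [exact hx i; exact le_refl 0]
  have hst : s = t := by
    have : s - t = 0 := by
      rw [hs_def, ht_def, ← Finset.sum_sub_distrib]
      have : ∀ i ∈ Finset.univ, max (y i - x i) 0 - max (x i - y i) 0 = y i - x i := by
        intro i _
        rcases le_total (x i) (y i) with h | h
        · rw [max_eq_left (by linarith), max_eq_right (by linarith)]; ring
        · rw [max_eq_right (by linarith), max_eq_left (by linarith)]; ring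
      rw [Finset.sum_congr rfl this, Finset.sum_sub_distrib, hx1, hy1]
      ring
    linarith
  have hl1 : l1 (x - y) = 2 * s := by
    rw [l1, hs_def]
    have : ∀ i ∈ Finset.univ, |(x - y) i| = max (x i - y i) 0 + max (y i - x i) 0 := by
      intro i _
      rcases le_total (x i) (y i) with h | h
      · rw [Pi.sub_apply, abs_of_nonpos (by linarith), max_eq_right (by linarith),
          max_eq_left (by linarith)]; ring
      · rw [Pi.sub_apply, abs_of_nonneg (by linarith), max_eq_left (by linarith),
          max_eq_right (by linarith)]; ring
    rw [Finset.sum_congr rfl this, Finset.sum_add_distrib, ← ht_def, ← hs_def, hst]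
    ring
  have h_sU : s ≤ (1 - a) * U := by
    rw [hs_def, hU_def, Finset.mul_sum]
    apply Finset.sum_le_sum
    intro i _
    by_cases hxy : x i < y i
    · rw [if_pos hxy, max_eq_left (by linarith)]
      nlinarith [h1 i]
    · rw [if_neg hxy, max_eq_right (by push_neg at hxy; linarith), mul_zero]
  have h_tV : t ≤ (1 - b) * V := by
    rw [ht_def, hV_def, Finset.mul_sum]
    apply Finset.sum_le_sum
    intro i _
    by_cases hxy : y i < x i
    · rw [if_pos hxy, max_eq_left (by linarith)]
      nlinarith [h2 i]
    · rw [if_neg hxy, max_eq_right (by push_neg at hxy; linarith), mul_zero]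
  have h_sV : s ≤ (1 - b) * V := hst ▸ h_tV
  have h_UV : U + b * V ≤ 1 := by
    rw [← hy1, hU_def, hV_def, Finset.mul_sum, ← Finset.sum_add_distrib]
    apply Finset.sum_le_sum
    intro i _
    by_cases hxy : x i < y i
    · rw [if_pos hxy, if_neg (by linarith), mul_zero, add_zero]
    · rw [if_neg hxy]
      by_cases hyx : y i < x i
      · rw [if_pos hyx, zero_add]; exact h2 i
      · rw [if_neg hyx, mul_zero, add_zero]; exact hy i
  have hab0 : 0 ≤ a * b := mul_nonneg ha0 hb0
  have hpos : (0:ℝ) < 1 + a * b := by linarith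
  have hkey : s * (1 + a * b) ≤ 1 - a * b :=
    endgame a b s U V ha0 ha1 hb0 hb1 hs0 hU0 hV0 h_sU h_sV h_UV
  rw [hl1, dH, ← ha_def, ← hb_def]
  have : s ≤ (1 - a * b) / (1 + a * b) := by
    rw [le_div_iff₀ hpos]; exact hkey
  linarith
end

section
/- Let (U_n)_{n≥1} be a sequence of i.i.d. nonnegative random variables with P(U_1 ≠ 0) > 0. If E[ln(1 + U_1)] < +∞ then limsup_{n→∞} U_n^{1/n} = 1 almost surely. -/
/-!
Since `U₀ ≠ 0` with positive probability, some `c > 0` has `P(U₀ > c) > 0`; by the second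
Borel–Cantelli lemma `Uₙ > c` infinitely often, and `c^{1/n} → 1` gives `limsup ≥ 1`.
Conversely, integrability of `log(1 + U₀)` makes `∑ P((k+1) log(1 + Uₙ) > n)` finite for every
`k`, so by the first Borel–Cantelli lemma eventually `Uₙ^{1/n} ≤ e^{1/(k+1)}`, whence `limsup ≤ 1`.
-/

open MeasureTheory ProbabilityTheory Filter Topology

section

variable {Ω : Type*} [MeasurableSpace Ω] {μ : Measure Ω}

lemma exists_pos_measure_setOf_lt_of_measure_ne_zero {f : Ω → ℝ} (hf : ∀ ω, 0 ≤ f ω)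
    (h : μ {ω | f ω ≠ 0} ≠ 0) : ∃ c > 0, μ {ω | c < f ω} ≠ 0 := by
  have hsub : {ω | f ω ≠ 0} ⊆ ⋃ k : ℕ, {ω | ((k : ℝ) + 1)⁻¹ < f ω} := by
    intro ω hω
    obtain ⟨k, hk⟩ := exists_nat_one_div_lt ((hf ω).lt_of_ne' hω)
    exact Set.mem_iUnion.2 ⟨k, by simpa [one_div] using hk⟩
  obtain ⟨k, hk⟩ : ∃ k : ℕ, μ {ω | ((k : ℝ) + 1)⁻¹ < f ω} ≠ 0 := by
    by_contra! h0
    exact h (measure_mono_null hsub (measure_iUnion_null h0))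
  exact ⟨_, by positivity, hk⟩

theorem ProbabilityTheory.iIndepFun.ae_frequently_mem {β : Type*} [MeasurableSpace β]
    {X : ℕ → Ω → β} (hind : iIndepFun X μ) (hX : ∀ n, Measurable (X n)) {A : Set β}
    (hA : MeasurableSet A) (hsum : ∑' n, μ (X n ⁻¹' A) = ⊤) :
    ∀ᵐ ω ∂μ, ∃ᶠ n in atTop, X n ω ∈ A := by
  have hsm : ∀ n, MeasurableSet (X n ⁻¹' A) := fun n => hX n hA
  have hs : iIndepSet (fun n => X n ⁻¹' A) μ :=
    (iIndepSet_iff_meas_biInter hsm).2 fun S => hind.measure_inter_preimage_eq_mul S fun _ _ => hA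
  have := hs.isProbabilityMeasure
  have hlimsup := measure_limsup_eq_one hsm hs hsum
  rw [← mem_ae_iff_prob_eq_one (MeasurableSet.measurableSet_limsup hsm)] at hlimsup
  filter_upwards [hlimsup] with ω hω
  exact mem_limsup_iff_frequently_mem.1 hω

theorem ProbabilityTheory.ae_eventually_le_natCast_of_identDistrib [IsProbabilityMeasure μ]
    {X : ℕ → Ω → ℝ} (hX : ∀ n, IdentDistrib (X n) (X 0) μ μ) (hint : Integrable (X 0) μ)
    (hnonneg : 0 ≤ X 0) :
    ∀ᵐ ω ∂μ, ∀ᶠ n in atTop, X n ω ≤ n := by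
  let : MeasureSpace Ω := ⟨μ⟩
  have hsum : ∑' n : ℕ, μ (X n ⁻¹' Set.Ioi (n : ℝ)) ≠ ⊤ := by
    rw [tsum_congr fun n => (hX n).measure_mem_eq measurableSet_Ioi]
    exact (tsum_prob_mem_Ioi_lt_top hint hnonneg).ne
  filter_upwards [ae_eventually_notMem hsum] with ω hω
  simpa using hω

end

lemma ENNReal.ofReal_rpow_inv_natCast_le_exp {x t : ℝ} {n : ℕ} (hx : 0 ≤ x) (hn : n ≠ 0)
    (h : Real.log (1 + x) ≤ n * t) :
    ENNReal.ofReal x ^ (n : ℝ)⁻¹ ≤ ENNReal.ofReal (Real.exp t) := by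
  have hxexp : x ≤ Real.exp (n * t) := by
    linarith [(Real.log_le_iff_le_exp (by linarith)).1 h]
  calc ENNReal.ofReal x ^ (n : ℝ)⁻¹ ≤ ENNReal.ofReal (Real.exp (n * t)) ^ (n : ℝ)⁻¹ := by
        gcongr
    _ = ENNReal.ofReal (Real.exp t) := by
        rw [ENNReal.ofReal_rpow_of_nonneg (Real.exp_pos _).le (by positivity), ← Real.exp_mul]
        field_simp

lemma limsup_ofReal_rpow_inv_natCast_le_one {x : ℕ → ℝ} (hx : ∀ n, 0 ≤ x n)
    (h : ∀ k : ℕ, ∀ᶠ n in atTop, ((k : ℝ) + 1) * Real.log (1 + x n) ≤ n) :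
    limsup (fun n : ℕ => ENNReal.ofReal (x n) ^ (n : ℝ)⁻¹) atTop ≤ 1 := by
  have hbound (k : ℕ) : limsup (fun n : ℕ => ENNReal.ofReal (x n) ^ (n : ℝ)⁻¹) atTop ≤
      ENNReal.ofReal (Real.exp ((k : ℝ) + 1)⁻¹) := by
    refine limsup_le_of_le (by isBoundedDefault) ?_
    filter_upwards [h k, eventually_ne_atTop 0] with n hn hn0
    refine ENNReal.ofReal_rpow_inv_natCast_le_exp (hx n) hn0 ?_
    rw [← div_eq_mul_inv, le_div_iff₀ (by positivity), mul_comm]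
    exact hn
  have hexp : Tendsto (fun k : ℕ => ENNReal.ofReal (Real.exp ((k : ℝ) + 1)⁻¹)) atTop (𝓝 1) := by
    have := (ENNReal.continuous_ofReal.comp Real.continuous_exp).tendsto 0
    simpa [Function.comp_def] using
      this.comp (by simpa using tendsto_one_div_add_atTop_nhds_zero_nat (𝕜 := ℝ))
  exact ge_of_tendsto' hexp hbound

lemma one_le_limsup_ofReal_rpow_inv_natCast {x : ℕ → ℝ} {c : ℝ} (hc : 0 < c)
    (h : ∃ᶠ n in atTop, c < x n) :
    1 ≤ limsup (fun n : ℕ => ENNReal.ofReal (x n) ^ (n : ℝ)⁻¹) atTop := by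
  have hroot : Tendsto (fun n : ℕ => ENNReal.ofReal (c ^ (n : ℝ)⁻¹)) atTop (𝓝 1) := by
    have := ENNReal.continuous_ofReal.continuousAt.comp (Real.continuousAt_const_rpow hc.ne' (b := 0))
    simpa [Function.comp_def] using this.tendsto.comp tendsto_inv_atTop_nhds_zero_nat
  refine le_of_forall_lt_imp_le_of_dense fun a ha => le_limsup_of_frequently_le' ?_
  refine (h.and_eventually (hroot.eventually (eventually_gt_nhds ha))).mono ?_
  rintro n ⟨hcn, han⟩
  calc a ≤ ENNReal.ofReal (c ^ (n : ℝ)⁻¹) := han.le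
    _ = ENNReal.ofReal c ^ (n : ℝ)⁻¹ := (ENNReal.ofReal_rpow_of_pos hc).symm
    _ ≤ ENNReal.ofReal (x n) ^ (n : ℝ)⁻¹ := by gcongr

theorem stmt11 {Ω : Type*} [MeasurableSpace Ω] (P : Measure Ω) [IsProbabilityMeasure P]
    (U : ℕ → Ω → ℝ) (hm : ∀ n, Measurable (U n)) (hpos : ∀ n ω, 0 ≤ U n ω)
    (hiid : iIndepFun U P)
    (hident : ∀ n, Measure.map (U n) P = Measure.map (U 0) P)
    (hne : 0 < P {ω | U 0 ω ≠ 0})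
    (hint : ∫⁻ ω, ENNReal.ofReal (Real.log (1 + U 0 ω)) ∂P < ⊤) :
    ∀ᵐ ω ∂P,
      limsup (fun n : ℕ => (ENNReal.ofReal (U n ω)) ^ ((n : ℝ)⁻¹)) atTop = 1 := by
  have hU : ∀ n, IdentDistrib (U n) (U 0) P P := fun n =>
    ⟨(hm n).aemeasurable, (hm 0).aemeasurable, hident n⟩
  have hlog : Measurable fun x : ℝ => Real.log (1 + x) := by fun_prop
  have hlog_nonneg : ∀ ω, 0 ≤ Real.log (1 + U 0 ω) := fun ω =>
    Real.log_nonneg (by linarith [hpos 0 ω])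
  have hlog_int : Integrable (fun ω => Real.log (1 + U 0 ω)) P :=
    ⟨(hlog.comp (hm 0)).aestronglyMeasurable,
      (hasFiniteIntegral_iff_ofReal (ae_of_all _ hlog_nonneg)).2 hint⟩
  obtain ⟨c, hc, hPc⟩ := exists_pos_measure_setOf_lt_of_measure_ne_zero (hpos 0) hne.ne'
  have hfreq : ∀ᵐ ω ∂P, ∃ᶠ n in atTop, U n ω ∈ Set.Ioi c := by
    refine hiid.ae_frequently_mem hm measurableSet_Ioi ?_
    rw [tsum_congr fun n => (hU n).measure_mem_eq measurableSet_Ioi]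
    exact ENNReal.tsum_const_eq_top_of_ne_zero hPc
  have hsmall (k : ℕ) :
      ∀ᵐ ω ∂P, ∀ᶠ n in atTop, ((k : ℝ) + 1) * Real.log (1 + U n ω) ≤ n :=
    ae_eventually_le_natCast_of_identDistrib
      (fun n => (hU n).comp (measurable_const.mul hlog))
      (hlog_int.const_mul _) fun ω => mul_nonneg (by positivity) (hlog_nonneg ω)
  filter_upwards [hfreq, ae_all_iff.2 hsmall] with ω hω_freq hω_small
  exact le_antisymm (limsup_ofReal_rpow_inv_natCast_le_one (hpos · ω) hω_small)
    (one_le_limsup_ofReal_rpow_inv_natCast hc hω_freq)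
end

section
/- Let T be a locally compact Hausdorff topological semigroup with identity, μ a Borel probability measure on T, T_μ the closed subsemigroup generated by the support of μ, and R_μ := {s ∈ T_μ : Σ_{n≥1} μ^{*n}(V) = +∞ for every open neighborhood V of s} the conservative part. Then R_μ is a closed subset of T_μ and R_μ·T_μ ⊆ R_μ, i.e. R_μ is a closed right ideal of T_μ. -/
open MeasureTheory

/-- The `n`-fold convolution power of a measure on a monoid:
`μ^{*0} = δ_e` and `μ^{*(n+1)} = μ^{*n} * μ`. -/
noncomputable def convPow {T : Type*} [MeasurableSpace T] [Monoid T]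
    (μ : Measure T) : ℕ → Measure T
  | 0 => Measure.dirac 1
  | n + 1 => Measure.map (fun p : T × T => p.1 * p.2) ((convPow μ n).prod μ)

/-- The (topological) support of a measure. -/
def msupport {T : Type*} [TopologicalSpace T] [MeasurableSpace T]
    (ν : Measure T) : Set T :=
  {t | ∀ V : Set T, IsOpen V → t ∈ V → 0 < ν V}

/-- The closed subsemigroup generated by the support of `μ`. -/
def Tmu {T : Type*} [TopologicalSpace T] [MeasurableSpace T] [Monoid T]
    (μ : Measure T) : Set T :=
  closure (⋃ n : ℕ, msupport (convPow μ n))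

/-- The conservative part of `T_μ`. -/
def Rmu {T : Type*} [TopologicalSpace T] [MeasurableSpace T] [Monoid T]
    (μ : Measure T) : Set T :=
  {s ∈ Tmu μ | ∀ V : Set T, IsOpen V → s ∈ V →
    (∑' n : ℕ, convPow μ (n + 1) V) = ⊤}

/-!
Write `μⁿ` for `convPow μ n`. If `U * W ⊆ V`, disintegrating `μ^{m+1}` along its last factor and
inducting on `m` gives `μⁿ U * μᵐ W ≤ μ^{n+m} V`. Given `r ∈ R_μ` and `s ∈ T_μ`, choose open
`U ∋ r`, `W ∋ s` with `U * W ⊆ V`; then `μᵐ W > 0` for some `m`, and summing over `n` shows that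
`∑ₙ μⁿ V` diverges. The same inequality shows that products of support points of convolution
powers are support points, so `T_μ` is a semigroup. Closedness of `R_μ` is purely topological.

Without second countability the multiplication need not be measurable for the product
σ-algebra, in which case `Measure.map` returns `0`; divergence of `∑ₙ μⁿ T` rules this out.
-/

open Set Topology
open scoped Pointwise ENNReal

lemma isClosed_setOf_forall_isOpen_imp {X : Type*} [TopologicalSpace X] (P : Set X → Prop) :
    IsClosed {x : X | ∀ V : Set X, IsOpen V → x ∈ V → P V} := by
  refine closure_subset_iff_isClosed.mp fun x hx V hV hxV => ?_
  obtain ⟨y, hyV, hy⟩ := mem_closure_iff.mp hx V hV hxV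
  exact hy V hV hyV

lemma exists_isOpen_mul_subset {T : Type*} [TopologicalSpace T] [Mul T] [ContinuousMul T]
    {a b : T} {V : Set T} (hV : IsOpen V) (hab : a * b ∈ V) :
    ∃ U W : Set T, IsOpen U ∧ IsOpen W ∧ a ∈ U ∧ b ∈ W ∧ U * W ⊆ V := by
  obtain ⟨U, W, hU, hW, haU, hbW, hUW⟩ :=
    isOpen_prod_iff.mp (hV.preimage continuous_mul) a b hab
  exact ⟨U, W, hU, hW, haU, hbW, mul_subset_iff.mpr fun u hu w hw => hUW (mk_mem_prod hu hw)⟩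

namespace convPow

variable {T : Type*} [Monoid T] [MeasurableSpace T] (μ : Measure T)

lemma succ_def (n : ℕ) :
    convPow μ (n + 1) = Measure.map (fun p : T × T => p.1 * p.2) ((convPow μ n).prod μ) :=
  rfl

instance [IsFiniteMeasure μ] (n : ℕ) : IsFiniteMeasure (convPow μ n) := by
  induction n with
  | zero => exact inferInstanceAs (IsFiniteMeasure (Measure.dirac 1))
  | succ n ih => rw [succ_def]; infer_instance

variable {μ}

lemma eq_zero_of_le {n m : ℕ} (hnm : n ≤ m) (h : convPow μ n = 0) : convPow μ m = 0 := by
  induction m, hnm using Nat.le_induction with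
  | base => exact h
  | succ m _ ih => rw [succ_def, ih, Measure.zero_prod, Measure.map_zero]

lemma aemeasurable_mul_of_tsum_eq_top [IsFiniteMeasure μ] {S : Set T}
    (h : ∑' n, convPow μ (n + 1) S = ⊤) (k : ℕ) :
    AEMeasurable (fun p : T × T => p.1 * p.2) ((convPow μ k).prod μ) := by
  by_contra hk
  have hdead : ∀ n ∉ Finset.range (k + 1), convPow μ (n + 1) S = 0 := fun n hn => by
    rw [eq_zero_of_le (n := k + 1) (by simp at hn; omega) (Measure.map_of_not_aemeasurable hk),
      Measure.coe_zero, Pi.zero_apply]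
  rw [tsum_eq_sum hdead] at h
  exact ENNReal.sum_ne_top.mpr (fun n _ => measure_ne_top _ _) h

lemma succ_apply [IsFiniteMeasure μ] {k : ℕ}
    (hk : AEMeasurable (fun p : T × T => p.1 * p.2) ((convPow μ k).prod μ))
    {S : Set T} (hS : MeasurableSet S) :
    convPow μ (k + 1) S = ∫⁻ y, convPow μ k ((· * y) ⁻¹' S) ∂μ := by
  obtain ⟨g, hg, hmul_eq⟩ := hk
  rw [succ_def, Measure.map_congr hmul_eq, Measure.map_apply hg hS,
    Measure.prod_apply_symm (hg hS)]
  have hswap : ∀ᵐ q ∂(μ.prod (convPow μ k)), q.2 * q.1 = g (q.2, q.1) :=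
    Measure.measurePreserving_swap.quasiMeasurePreserving.ae hmul_eq
  refine lintegral_congr_ae ?_
  filter_upwards [Measure.ae_ae_of_ae_prod hswap] with y hy
  refine measure_congr ?_
  filter_upwards [hy] with x hx
  change (g (x, y) ∈ S) = (x * y ∈ S)
  rw [hx]

lemma mul_le_add [IsFiniteMeasure μ] [MeasurableMul T]
    (hmul : ∀ k, AEMeasurable (fun p : T × T => p.1 * p.2) ((convPow μ k).prod μ))
    (n m : ℕ) {U W V : Set T} (hW : MeasurableSet W) (hV : MeasurableSet V) (hUWV : U * W ⊆ V) :
    convPow μ n U * convPow μ m W ≤ convPow μ (n + m) V := by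
  induction m generalizing W V with
  | zero =>
    by_cases h1 : (1 : T) ∈ W
    · have hUV : U ⊆ V := fun u hu => mul_one u ▸ hUWV (mul_mem_mul hu h1)
      calc convPow μ n U * convPow μ 0 W ≤ convPow μ n U * 1 := by
            gcongr; exact prob_le_one (μ := Measure.dirac 1)
        _ ≤ convPow μ (n + 0) V := by rw [mul_one]; exact measure_mono hUV
    · simp [convPow, Measure.dirac_apply' 1 hW, h1]
  | succ m ih =>
    rw [← add_assoc, succ_apply (hmul m) hW, succ_apply (hmul (n + m)) hV]
    refine (lintegral_const_mul_le _ _).trans (lintegral_mono fun y => ?_)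
    refine ih (measurable_mul_const y hW) (measurable_mul_const y hV) ?_
    rintro _ ⟨u, hu, w, hw, rfl⟩
    simpa only [mem_preimage, mul_assoc] using hUWV (mul_mem_mul hu hw)

end convPow

lemma exists_convPow_pos_of_mem_Tmu {T : Type*} [TopologicalSpace T] [Monoid T]
    [MeasurableSpace T] {μ : Measure T} {s : T} (hs : s ∈ Tmu μ) {W : Set T} (hW : IsOpen W)
    (hsW : s ∈ W) : ∃ m, 0 < convPow μ m W := by
  obtain ⟨w, hwW, hw⟩ := mem_closure_iff.mp hs W hW hsW
  obtain ⟨m, hw⟩ := mem_iUnion.mp hw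
  exact ⟨m, hw W hW hwW⟩

section Conservative

variable {T : Type*} [TopologicalSpace T] [Monoid T] [ContinuousMul T]
  [MeasurableSpace T] [BorelSpace T] {μ : Measure T} [IsFiniteMeasure μ]

lemma mul_mem_msupport_convPow
    (hmul : ∀ k, AEMeasurable (fun p : T × T => p.1 * p.2) ((convPow μ k).prod μ))
    {n m : ℕ} {u w : T} (hu : u ∈ msupport (convPow μ n)) (hw : w ∈ msupport (convPow μ m)) :
    u * w ∈ msupport (convPow μ (n + m)) := by
  intro V hV huwV
  obtain ⟨U, W, hU, hW, huU, hwW, hUWV⟩ := exists_isOpen_mul_subset hV huwV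
  calc 0 < convPow μ n U * convPow μ m W := ENNReal.mul_pos (hu U hU huU).ne' (hw W hW hwW).ne'
    _ ≤ convPow μ (n + m) V :=
      convPow.mul_le_add hmul n m hW.measurableSet hV.measurableSet hUWV

lemma mul_mem_Tmu
    (hmul : ∀ k, AEMeasurable (fun p : T × T => p.1 * p.2) ((convPow μ k).prod μ))
    {r s : T} (hr : r ∈ Tmu μ) (hs : s ∈ Tmu μ) : r * s ∈ Tmu μ := by
  refine map_mem_closure₂ continuous_mul hr hs fun u hu w hw => ?_
  obtain ⟨n, hu⟩ := mem_iUnion.mp hu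
  obtain ⟨m, hw⟩ := mem_iUnion.mp hw
  exact mem_iUnion.mpr ⟨n + m, mul_mem_msupport_convPow hmul hu hw⟩

lemma tsum_convPow_eq_top_mul
    (hmul : ∀ k, AEMeasurable (fun p : T × T => p.1 * p.2) ((convPow μ k).prod μ))
    {r s : T} (hr : ∀ V : Set T, IsOpen V → r ∈ V → ∑' n, convPow μ (n + 1) V = ⊤)
    (hs : s ∈ Tmu μ) {V : Set T} (hV : IsOpen V) (hrsV : r * s ∈ V) :
    ∑' n, convPow μ (n + 1) V = ⊤ := by
  obtain ⟨U, W, hU, hW, hrU, hsW, hUWV⟩ := exists_isOpen_mul_subset hV hrsV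
  obtain ⟨m, hm⟩ := exists_convPow_pos_of_mem_Tmu hs hW hsW
  refine top_le_iff.mp ?_
  calc ⊤ = (∑' n, convPow μ (n + 1) U) * convPow μ m W := by
        rw [hr U hU hrU, ENNReal.top_mul hm.ne']
    _ = ∑' n, convPow μ (n + 1) U * convPow μ m W := ENNReal.tsum_mul_right.symm
    _ ≤ ∑' n, convPow μ (n + m + 1) V := ENNReal.tsum_le_tsum fun n => by
        simpa only [add_right_comm n 1 m] using
          convPow.mul_le_add hmul (n + 1) m hW.measurableSet hV.measurableSet hUWV
    _ ≤ ∑' k, convPow μ (k + 1) V :=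
        ENNReal.tsum_comp_le_tsum_of_injective (add_left_injective m) fun k =>
          convPow μ (k + 1) V

end Conservative

theorem stmt12_general {T : Type*} [TopologicalSpace T]
    [Monoid T] [ContinuousMul T] [MeasurableSpace T] [BorelSpace T]
    (μ : Measure T) [IsProbabilityMeasure μ] :
    IsClosed (Rmu μ) ∧ ∀ r ∈ Rmu μ, ∀ s ∈ Tmu μ, r * s ∈ Rmu μ := by
  refine ⟨isClosed_closure.inter (isClosed_setOf_forall_isOpen_imp _), fun r hr s hs => ?_⟩
  have hmul := convPow.aemeasurable_mul_of_tsum_eq_top (hr.2 univ isOpen_univ trivial)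
  exact ⟨mul_mem_Tmu hmul hr.1 hs, fun V hV hrsV => tsum_convPow_eq_top_mul hmul hr.2 hs hV hrsV⟩

/-- `R_μ` is a closed right ideal of `T_μ`. -/
theorem stmt12 {T : Type*} [TopologicalSpace T] [T2Space T] [LocallyCompactSpace T]
    [Monoid T] [ContinuousMul T] [MeasurableSpace T] [BorelSpace T]
    (μ : Measure T) [IsProbabilityMeasure μ] :
    IsClosed (Rmu μ) ∧ ∀ r ∈ Rmu μ, ∀ s ∈ Tmu μ, r * s ∈ Rmu μ :=
  stmt12_general μ
end

section
/- Let A ∈ S_δ with spectral radius ρ(A) > 1 and B ∈ R_+^d. Then the translation parts B_n := Σ_{k=0}^{n-1} A^k B of the iterated affine maps x ↦ A^n x + B_n satisfy |B_n| ≤ β·‖A^n‖ for all n ≥ 1, where β := (1/δ)·|B|·Σ_{i=1}^∞ 1/‖A^i‖ < +∞. -/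
open Matrix BigOperators

/-- The spectral radius of a real matrix: the largest modulus of a complex
eigenvalue. -/
noncomputable def specRad {d : ℕ} (A : Matrix (Fin d) (Fin d) ℝ) : ℝ :=
  sSup {r : ℝ | ∃ c : ℂ, c ∈ spectrum ℂ (A.map (fun a => (a : ℂ))) ∧ r = ‖c‖}

/-!
Each summand `A^k B` has ℓ¹ norm at most `‖A^k‖ |B|`, and the defining property of `S_δ`
(all entries of a row are comparable up to the factor `δ`) makes the column-sum norm
supermultiplicative up to `δ`: `δ ‖A^k‖ ‖A^(n-k)‖ ≤ ‖A^n‖`. Hence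
`|B_n| ≤ δ⁻¹ |B| ‖A^n‖ ∑_{j=1}^{n} 1/‖A^j‖`. The series converges because an eigenvalue `c` of
modulus `> 1` gives `|c|^n ≤ ‖A^n‖`.
-/

section MatNorm

variable {d : ℕ}

lemma colSum_le_matNorm (A : Matrix (Fin d) (Fin d) ℝ) (j : Fin d) :
    ∑ i, A i j ≤ matNorm A :=
  le_ciSup (f := fun j => ∑ i, A i j) (Set.finite_range _).bddAbove j

lemma exists_matNorm_eq_colSum [Nonempty (Fin d)] (A : Matrix (Fin d) (Fin d) ℝ) :
    ∃ j, matNorm A = ∑ i, A i j := by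
  obtain ⟨j, hj⟩ := Finite.exists_max (fun j => ∑ i, A i j)
  exact ⟨j, le_antisymm (ciSup_le hj) (colSum_le_matNorm A j)⟩

lemma matNorm_pos [Nonempty (Fin d)] {A : Matrix (Fin d) (Fin d) ℝ} (hA : memS A) :
    0 < matNorm A := by
  let j := Classical.arbitrary (Fin d)
  obtain ⟨i, hi⟩ := hA.2 j
  exact (Finset.sum_pos' (fun t _ => hA.1 t j) ⟨i, Finset.mem_univ i, hi⟩).trans_le
    (colSum_le_matNorm A j)

lemma matNorm_nonneg [Nonempty (Fin d)] {A : Matrix (Fin d) (Fin d) ℝ} (hA : ∀ i j, 0 ≤ A i j) :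
    0 ≤ matNorm A := by
  obtain ⟨j, hj⟩ := exists_matNorm_eq_colSum A
  exact hj ▸ Finset.sum_nonneg fun i _ => hA i j

lemma l1_sum_le {ι : Type*} (s : Finset ι) (v : ι → Fin d → ℝ) :
    l1 (∑ k ∈ s, v k) ≤ ∑ k ∈ s, l1 (v k) := by
  unfold l1
  calc ∑ i, |(∑ k ∈ s, v k) i| ≤ ∑ i, ∑ k ∈ s, |v k i| :=
        Finset.sum_le_sum fun i _ => by
          simpa only [Finset.sum_apply] using Finset.abs_sum_le_sum_abs (fun k => v k i) s
    _ = ∑ k ∈ s, ∑ i, |v k i| := Finset.sum_comm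

lemma l1_mulVec_le {M : Matrix (Fin d) (Fin d) ℝ} (hM : ∀ i j, 0 ≤ M i j) (x : Fin d → ℝ) :
    l1 (M *ᵥ x) ≤ matNorm M * l1 x := by
  unfold l1
  calc ∑ i, |(M *ᵥ x) i| ≤ ∑ i, ∑ j, M i j * |x j| := by
        refine Finset.sum_le_sum fun i _ => ?_
        change |∑ j, M i j * x j| ≤ _
        refine (Finset.abs_sum_le_sum_abs _ _).trans_eq ?_
        simp only [abs_mul, abs_of_nonneg (hM i _)]
    _ = ∑ j, (∑ i, M i j) * |x j| := by rw [Finset.sum_comm]; simp only [Finset.sum_mul]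
    _ ≤ ∑ j, matNorm M * |x j| :=
        Finset.sum_le_sum fun j _ =>
          mul_le_mul_of_nonneg_right (colSum_le_matNorm M j) (abs_nonneg _)
    _ = matNorm M * ∑ j, |x j| := Finset.mul_sum _ _ _ |>.symm

lemma norm_le_matNorm_of_mem_spectrum {X : Matrix (Fin d) (Fin d) ℝ} (hX : ∀ i j, 0 ≤ X i j)
    {c : ℂ} (hc : c ∈ spectrum ℂ (X.map (fun a => (a : ℂ)))) : ‖c‖ ≤ matNorm X := by
  rw [← Matrix.spectrum_toLin', ← Module.End.hasEigenvalue_iff_mem_spectrum] at hc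
  obtain ⟨v, hv, hv0⟩ := hc.exists_hasEigenvector
  rw [Module.End.mem_eigenspace_iff, Matrix.toLin'_apply] at hv
  have hs : 0 < ∑ j, ‖v j‖ := by
    obtain ⟨j, hj⟩ := Function.ne_iff.mp hv0
    exact Finset.sum_pos' (fun _ _ => norm_nonneg _) ⟨j, Finset.mem_univ j, norm_pos_iff.mpr hj⟩
  refine le_of_mul_le_mul_right ?_ hs
  calc ‖c‖ * ∑ j, ‖v j‖ = ∑ i, ‖(c • v) i‖ := by
        simp only [Finset.mul_sum, Pi.smul_apply, smul_eq_mul, norm_mul]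
    _ = ∑ i, ‖∑ j, (X i j : ℂ) * v j‖ := by rw [← hv]; rfl
    _ ≤ ∑ i, ∑ j, X i j * ‖v j‖ := by
        refine Finset.sum_le_sum fun i _ => (norm_sum_le _ _).trans_eq ?_
        simp only [norm_mul, Complex.norm_real, Real.norm_of_nonneg (hX i _)]
    _ = ∑ j, (∑ i, X i j) * ‖v j‖ := by rw [Finset.sum_comm]; simp only [Finset.sum_mul]
    _ ≤ ∑ j, matNorm X * ‖v j‖ :=
        Finset.sum_le_sum fun j _ =>
          mul_le_mul_of_nonneg_right (colSum_le_matNorm X j) (norm_nonneg _)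
    _ = matNorm X * ∑ j, ‖v j‖ := (Finset.mul_sum _ _ _).symm

lemma exists_one_lt_pow_le_matNorm_pow {A : Matrix (Fin d) (Fin d) ℝ} (hA : ∀ i j, 0 ≤ A i j)
    (hρ : 1 < specRad A) : ∃ r : ℝ, 1 < r ∧ ∀ n : ℕ, r ^ n ≤ matNorm (A ^ n) := by
  obtain ⟨c, hc, hc1⟩ : ∃ c ∈ spectrum ℂ (A.map (fun a => (a : ℂ))), 1 < ‖c‖ := by
    by_contra! h
    refine hρ.not_ge (Real.sSup_le ?_ zero_le_one)
    rintro r ⟨c, hc, rfl⟩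
    exact h c hc
  refine ⟨‖c‖, hc1, fun n => ?_⟩
  have hcn := spectrum.pow_mem_pow _ n hc
  rw [show (A.map fun a => (a : ℂ)) ^ n = (A ^ n).map Complex.ofRealHom from
    (Matrix.map_pow A Complex.ofRealHom n).symm] at hcn
  simpa only [norm_pow] using
    norm_le_matNorm_of_mem_spectrum (Matrix.pow_apply_nonneg hA n) hcn

lemma summable_one_div_matNorm_pow_succ {A : Matrix (Fin d) (Fin d) ℝ}
    (hA : ∀ i j, 0 ≤ A i j) (hρ : 1 < specRad A) :
    Summable (fun i : ℕ => 1 / matNorm (A ^ (i + 1))) := by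
  obtain ⟨r, hr1, hr⟩ := exists_one_lt_pow_le_matNorm_pow hA hρ
  have hr0 : 0 < r := one_pos.trans hr1
  have hgeom : Summable (fun i : ℕ => (1 / r) ^ (i + 1)) :=
    (summable_nat_add_iff 1).mpr
      (summable_geometric_of_lt_one (by positivity) ((div_lt_one hr0).mpr hr1))
  refine Summable.of_nonneg_of_le (fun i => ?_) (fun i => ?_) hgeom
  · exact one_div_nonneg.mpr ((pow_pos hr0 _).le.trans (hr _))
  · rw [_root_.one_div_pow]
    exact one_div_le_one_div_of_le (pow_pos hr0 _) (hr _)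

end MatNorm

section SDelta

variable {d : ℕ} {δ : ℝ}

lemma memSdelta.mul_left {X Y : Matrix (Fin d) (Fin d) ℝ} (hY : memSdelta δ Y) (hX : memS X) :
    memSdelta δ (X * Y) := by
  obtain ⟨hX0, hXc⟩ := hX
  obtain ⟨⟨hY0, hYc⟩, hYr⟩ := hY
  refine ⟨⟨fun i j => Matrix.mul_apply (M := X) ▸
    Finset.sum_nonneg fun m _ => mul_nonneg (hX0 i m) (hY0 m j), fun j => ?_⟩, fun i j k => ?_⟩
  · obtain ⟨m, hm⟩ := hYc j
    obtain ⟨i, hi⟩ := hXc m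
    exact ⟨i, Finset.sum_pos' (fun t _ => mul_nonneg (hX0 i t) (hY0 t j))
      ⟨m, Finset.mem_univ m, mul_pos hi hm⟩⟩
  · rw [Matrix.mul_apply, Matrix.mul_apply, Finset.mul_sum]
    refine Finset.sum_le_sum fun m _ => ?_
    calc δ * (X i m * Y m k) = X i m * (δ * Y m k) := by ring
      _ ≤ X i m * Y m j := mul_le_mul_of_nonneg_left (hYr m j k) (hX0 i m)

lemma memSdelta.pow_succ {A : Matrix (Fin d) (Fin d) ℝ} (hA : memSdelta δ A) (n : ℕ) :
    memSdelta δ (A ^ (n + 1)) := by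
  induction n with
  | zero => simpa only [zero_add, pow_one] using hA
  | succ n ih => rw [_root_.pow_succ]; exact hA.mul_left ih.1

lemma memSdelta.mul_matNorm_le_colSum [Nonempty (Fin d)] {X : Matrix (Fin d) (Fin d) ℝ}
    (hX : memSdelta δ X) (j : Fin d) : δ * matNorm X ≤ ∑ i, X i j := by
  obtain ⟨k, hk⟩ := exists_matNorm_eq_colSum X
  rw [hk, Finset.mul_sum]
  exact Finset.sum_le_sum fun i _ => hX.2 i j k

lemma memSdelta.mul_matNorm_mul_le [Nonempty (Fin d)] {X Y : Matrix (Fin d) (Fin d) ℝ}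
    (hX : memSdelta δ X) (hY : ∀ i j, 0 ≤ Y i j) :
    δ * matNorm X * matNorm Y ≤ matNorm (X * Y) := by
  obtain ⟨j, hj⟩ := exists_matNorm_eq_colSum Y
  calc δ * matNorm X * matNorm Y = ∑ m, δ * matNorm X * Y m j := by rw [hj, Finset.mul_sum]
    _ ≤ ∑ m, (∑ i, X i m) * Y m j :=
        Finset.sum_le_sum fun m _ =>
          mul_le_mul_of_nonneg_right (hX.mul_matNorm_le_colSum m) (hY m j)
    _ = ∑ i, (X * Y) i j := by
        simp only [Matrix.mul_apply, Finset.sum_mul]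
        exact Finset.sum_comm
    _ ≤ matNorm (X * Y) := colSum_le_matNorm _ j

lemma memSdelta.mul_matNorm_pow_mul_le [Nonempty (Fin d)] {A : Matrix (Fin d) (Fin d) ℝ}
    (hA : memSdelta δ A) (hδ1 : δ ≤ 1) (k m : ℕ) :
    δ * matNorm (A ^ k) * matNorm (A ^ m) ≤ matNorm (A ^ (k + m)) := by
  rw [pow_add]
  cases k with
  | zero =>
    have hm := matNorm_nonneg (Matrix.pow_apply_nonneg hA.1.1 m)
    have h1 : matNorm (1 : Matrix (Fin d) (Fin d) ℝ) = 1 := by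
      simp [matNorm, Matrix.one_apply]
    rw [pow_zero, h1, mul_one, one_mul]
    exact mul_le_of_le_one_left hm hδ1
  | succ k => exact (hA.pow_succ k).mul_matNorm_mul_le (Matrix.pow_apply_nonneg hA.1.1 m)

lemma memSdelta.sum_matNorm_pow_le [Nonempty (Fin d)] {A : Matrix (Fin d) (Fin d) ℝ}
    (hA : memSdelta δ A) (hδ0 : 0 < δ) (hδ1 : δ ≤ 1) (n : ℕ) :
    ∑ k ∈ Finset.range n, matNorm (A ^ k) ≤
      1 / δ * (∑ j ∈ Finset.range n, 1 / matNorm (A ^ (j + 1))) * matNorm (A ^ n) := by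
  rw [← Finset.sum_range_reflect, Finset.mul_sum, Finset.sum_mul]
  refine Finset.sum_le_sum fun j hj => ?_
  have hjn : n - 1 - j + (j + 1) = n := by have := Finset.mem_range.mp hj; omega
  have hpos := matNorm_pos (hA.pow_succ j).1
  have key := hA.mul_matNorm_pow_mul_le hδ1 (n - 1 - j) (j + 1)
  rw [hjn] at key
  rw [show 1 / δ * (1 / matNorm (A ^ (j + 1))) * matNorm (A ^ n) =
      matNorm (A ^ n) / (δ * matNorm (A ^ (j + 1))) by ring, le_div_iff₀ (by positivity)]
  linarith

end SDelta

theorem stmt15_general {d : ℕ} (hd : 2 ≤ d) (δ : ℝ) (hδ0 : 0 < δ) (hδ1 : δ ≤ 1)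
    (A : Matrix (Fin d) (Fin d) ℝ) (hA : memSdelta δ A) (hρ : 1 < specRad A)
    (B : Fin d → ℝ) :
    Summable (fun i : ℕ => 1 / matNorm (A ^ (i + 1))) ∧
      ∀ n : ℕ, 1 ≤ n →
        l1 (∑ k ∈ Finset.range n, (A ^ k).mulVec B) ≤
          ((1 / δ) * l1 B * ∑' i : ℕ, 1 / matNorm (A ^ (i + 1))) * matNorm (A ^ n) := by
  have : Nonempty (Fin d) := ⟨⟨0, by omega⟩⟩
  have hsum := summable_one_div_matNorm_pow_succ hA.1.1 hρ
  refine ⟨hsum, fun n _ => ?_⟩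
  have hpartial : ∑ j ∈ Finset.range n, 1 / matNorm (A ^ (j + 1)) ≤
      ∑' i : ℕ, 1 / matNorm (A ^ (i + 1)) :=
    hsum.sum_le_tsum _ fun i _ => (one_div_pos.mpr (matNorm_pos (hA.pow_succ i).1)).le
  have hB := (Finset.sum_nonneg fun i _ => abs_nonneg (B i) : 0 ≤ l1 B)
  calc l1 (∑ k ∈ Finset.range n, (A ^ k) *ᵥ B)
      ≤ ∑ k ∈ Finset.range n, matNorm (A ^ k) * l1 B :=
        (l1_sum_le _ _).trans <| Finset.sum_le_sum fun k _ =>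
          l1_mulVec_le (Matrix.pow_apply_nonneg hA.1.1 k) B
    _ = (∑ k ∈ Finset.range n, matNorm (A ^ k)) * l1 B := (Finset.sum_mul _ _ _).symm
    _ ≤ (1 / δ * (∑ j ∈ Finset.range n, 1 / matNorm (A ^ (j + 1))) * matNorm (A ^ n)) * l1 B :=
        mul_le_mul_of_nonneg_right (hA.sum_matNorm_pow_le hδ0 hδ1 n) hB
    _ ≤ (1 / δ * (∑' i : ℕ, 1 / matNorm (A ^ (i + 1))) * matNorm (A ^ n)) * l1 B := by
        have hAn := matNorm_nonneg (Matrix.pow_apply_nonneg hA.1.1 n)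
        gcongr
    _ = (1 / δ * l1 B * ∑' i : ℕ, 1 / matNorm (A ^ (i + 1))) * matNorm (A ^ n) := by ring

theorem stmt15 {d : ℕ} (hd : 2 ≤ d) (δ : ℝ) (hδ0 : 0 < δ) (hδ1 : δ ≤ 1)
    (A : Matrix (Fin d) (Fin d) ℝ) (hA : memSdelta δ A) (hρ : 1 < specRad A)
    (B : Fin d → ℝ) (hB : ∀ i, 0 ≤ B i) :
    Summable (fun i : ℕ => 1 / matNorm (A ^ (i + 1))) ∧
      ∀ n : ℕ, 1 ≤ n →
        l1 (∑ k ∈ Finset.range n, (A ^ k).mulVec B) ≤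
          ((1 / δ) * l1 B * ∑' i : ℕ, 1 / matNorm (A ^ (i + 1))) * matNorm (A ^ n) :=
  stmt15_general hd δ hδ0 hδ1 A hA hρ B
end
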